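/- arXiv:1901.03672 — 2 statements merged into one kernel-verified Lean document; each statement's English description precedes it below -/
import Mathlib

section
/- Fix q ∈ ℂ with q ≠ 0, q ≠ 1, p ∈ ℂ with p² = q, and γ,δ ∈ ℂ, and let n ≥ 1. For every w ∈ ℂ∖{0} for which the denominators m(pw) − m(w/p), m(p²w) − m(w) and m(w) − m(w/p²) are all nonzero, ξ_1(w)·(𝔻(𝔻ξ_n))(w) = [(1 − q^n)/(q − 1)]·[p·(1 − q^{n−1})/(q − 1)]·ξ_{n−1}(w). -/
/-!
Each factor of `ξ_n` splits as `1 + γδq^{2k+1} - q^k m(w) = (1 - q^k/w)(1 - γδq^{k+1} w)`, so `ξ_n`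
is the member `c = 1` of the family `h_n(c; w) = ∏_{k<n} (1 - c q^k/w)(1 - cγδq^{k+1} w)`.
Moving `w ↦ pw` and `w ↦ w/p` shifts both halves of the product by half a step in opposite
directions, so `h_n(c; pw)` and `h_n(c; w/p)` share the factor `h_{n-1}(cp; w)`, and their difference
is divisible by `m(pw) - m(w/p)`: `𝔻 h_n(c) = c (1 - q^n)/(q - 1) · h_{n-1}(cp)`. Applying this
twice gives `h_{n-2}(q)`, and `ξ_1 · h_{n-2}(q) = ξ_{n-1}`.
-/

open Complex Finset

/-- The q-quadratic lattice m(w) = w⁻¹ + γδq·w. -/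
noncomputable def mu (q γ δ w : ℂ) : ℂ := w⁻¹ + γ * δ * q * w

/-- Divided-difference operator on the lattice m(w) (p² = q). -/
noncomputable def Dq (q γ δ p : ℂ) (f : ℂ → ℂ) (w : ℂ) : ℂ :=
  (f (p * w) - f (w / p)) / (mu q γ δ (p * w) - mu q γ δ (w / p))

/-- ξ_n(w) = ∏_{k=0}^{n−1}(1 + γδq^{2k+1} − q^k·m(w)). -/
noncomputable def xi (q γ δ : ℂ) (n : ℕ) (w : ℂ) : ℂ :=
  ∏ k ∈ Finset.range n, (1 + γ * δ * q^(2*k+1) - q^k * mu q γ δ w)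

noncomputable def xiScaled (q γ δ c : ℂ) (n : ℕ) (w : ℂ) : ℂ :=
  ∏ k ∈ range n, (1 - c * q ^ k * w⁻¹) * (1 - c * γ * δ * q ^ (k + 1) * w)

section

variable {q γ δ p : ℂ}

theorem xi_eq_xiScaled_one (n : ℕ) {w : ℂ} (hw : w ≠ 0) :
    xi q γ δ n w = xiScaled q γ δ 1 n w := by
  refine prod_congr rfl fun k _ => ?_
  simp only [mu]
  field_simp
  ring

theorem xi_succ_eq_xi_one_mul (m : ℕ) {w : ℂ} (hw : w ≠ 0) :
    xi q γ δ (m + 1) w = xi q γ δ 1 w * xiScaled q γ δ q m w := by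
  simp only [xi_eq_xiScaled_one _ hw, xiScaled, prod_range_succ', prod_range_zero, one_mul]
  rw [mul_comm]
  congr 1
  refine prod_congr rfl fun k _ => ?_
  ring

theorem mu_mul_sub_mu_div (p w : ℂ) :
    mu q γ δ (p * w) - mu q γ δ (w / p) = (p - p⁻¹) * (γ * δ * q * w - w⁻¹) := by
  simp only [mu, mul_inv, div_eq_mul_inv, inv_inv]
  ring

theorem ne_zero_of_mu_mul_sub_mu_div_ne_zero {w : ℂ}
    (h : mu q γ δ (p * w) - mu q γ δ (w / p) ≠ 0) : p ≠ 0 ∧ w ≠ 0 := by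
  constructor <;> rintro rfl <;> simp at h

theorem xiScaled_succ_mul (hp : p ^ 2 = q) (hp0 : p ≠ 0) (c : ℂ) (m : ℕ) (w : ℂ) :
    xiScaled q γ δ c (m + 1) (p * w) = (1 - c * p⁻¹ * w⁻¹) *
      (1 - c * γ * δ * q ^ (m + 1) * p * w) * xiScaled q γ δ (c * p) m w := by
  subst hp
  simp only [xiScaled, prod_mul_distrib]
  rw [prod_range_succ' (fun k => 1 - c * (p ^ 2) ^ k * (p * w)⁻¹),
    prod_range_succ (fun k => 1 - c * γ * δ * (p ^ 2) ^ (k + 1) * (p * w))]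
  have h₁ : ∀ k, 1 - c * (p ^ 2) ^ (k + 1) * (p * w)⁻¹ = 1 - c * p * (p ^ 2) ^ k * w⁻¹ := by
    intro k; field_simp; ring
  have h₂ : ∀ k, 1 - c * γ * δ * (p ^ 2) ^ (k + 1) * (p * w)
      = 1 - c * p * γ * δ * (p ^ 2) ^ (k + 1) * w := fun k => by ring
  simp only [h₁, h₂]
  field_simp

theorem xiScaled_succ_div (hp : p ^ 2 = q) (hp0 : p ≠ 0) (c : ℂ) (m : ℕ) (w : ℂ) :
    xiScaled q γ δ c (m + 1) (w / p) = (1 - c * q ^ m * p * w⁻¹) *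
      (1 - c * γ * δ * q * p⁻¹ * w) * xiScaled q γ δ (c * p) m w := by
  subst hp
  simp only [xiScaled, prod_mul_distrib]
  rw [prod_range_succ (fun k => 1 - c * (p ^ 2) ^ k * (w / p)⁻¹),
    prod_range_succ' (fun k => 1 - c * γ * δ * (p ^ 2) ^ (k + 1) * (w / p))]
  have h₁ : ∀ k, 1 - c * (p ^ 2) ^ k * (w / p)⁻¹ = 1 - c * p * (p ^ 2) ^ k * w⁻¹ := by
    intro k; field_simp
  have h₂ : ∀ k, 1 - c * γ * δ * (p ^ 2) ^ (k + 1 + 1) * (w / p)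
      = 1 - c * p * γ * δ * (p ^ 2) ^ (k + 1) * w := by
    intro k; field_simp; ring
  simp only [h₁, h₂]
  field_simp
  ring

theorem xiScaled_mul_sub_xiScaled_div (hp : p ^ 2 = q) (hp0 : p ≠ 0) (c : ℂ) (n : ℕ) {w : ℂ}
    (hw : w ≠ 0) :
    xiScaled q γ δ c n (p * w) - xiScaled q γ δ c n (w / p)
      = (1 - q ^ n) * p⁻¹ * c * (γ * δ * q * w - w⁻¹) * xiScaled q γ δ (c * p) (n - 1) w := by
  cases n with
  | zero => simp [xiScaled]
  | succ m =>
    rw [xiScaled_succ_mul hp hp0 c m w, xiScaled_succ_div hp hp0 c m w, Nat.add_sub_cancel,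
      ← hp]
    field_simp
    ring

theorem Dq_xiScaled (hp : p ^ 2 = q) (c : ℂ) (n : ℕ) {w : ℂ}
    (hden : mu q γ δ (p * w) - mu q γ δ (w / p) ≠ 0) :
    Dq q γ δ p (xiScaled q γ δ c n) w
      = c * (1 - q ^ n) / (q - 1) * xiScaled q γ δ (c * p) (n - 1) w := by
  obtain ⟨hp0, hw⟩ := ne_zero_of_mu_mul_sub_mu_div_ne_zero hden
  rw [mu_mul_sub_mu_div p w] at hden
  obtain ⟨hpp, hX⟩ := mul_ne_zero_iff.mp hden
  have hq : q - 1 = (p - p⁻¹) * p := by rw [← hp]; field_simp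
  rw [Dq, xiScaled_mul_sub_xiScaled_div hp hp0 c n hw, mu_mul_sub_mu_div p w, hq]
  generalize γ * δ * q * w - w⁻¹ = X at hX ⊢
  field_simp

theorem Dq_congr {f g : ℂ → ℂ} {w : ℂ} (h₁ : f (p * w) = g (p * w)) (h₂ : f (w / p) = g (w / p)) :
    Dq q γ δ p f w = Dq q γ δ p g w := by
  simp only [Dq, h₁, h₂]

theorem Dq_const_mul (a : ℂ) (f : ℂ → ℂ) (w : ℂ) :
    Dq q γ δ p (fun v => a * f v) w = a * Dq q γ δ p f w := by
  simp only [Dq, ← mul_sub, mul_div_assoc]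

theorem Dq_xi (hp : p ^ 2 = q) (n : ℕ) {w : ℂ}
    (hden : mu q γ δ (p * w) - mu q γ δ (w / p) ≠ 0) :
    Dq q γ δ p (xi q γ δ n) w = (1 - q ^ n) / (q - 1) * xiScaled q γ δ p (n - 1) w := by
  obtain ⟨hp0, hw⟩ := ne_zero_of_mu_mul_sub_mu_div_ne_zero hden
  rw [Dq_congr (g := xiScaled q γ δ 1 n) (xi_eq_xiScaled_one n (mul_ne_zero hp0 hw))
    (xi_eq_xiScaled_one n (div_ne_zero hw hp0)), Dq_xiScaled hp 1 n hden, one_mul, one_mul]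

end

theorem stmt_13_general (q p γ δ : ℂ) (hp : p^2 = q)
    (n : ℕ) :
    ∀ w : ℂ, w ≠ 0 →
      mu q γ δ (p * w) - mu q γ δ (w / p) ≠ 0 →
      mu q γ δ (p^2 * w) - mu q γ δ w ≠ 0 →
      mu q γ δ w - mu q γ δ (w / p^2) ≠ 0 →
      xi q γ δ 1 w * Dq q γ δ p (Dq q γ δ p (fun v => xi q γ δ n v)) w
        = ((1 - q^n) / (q - 1)) * (p * (1 - q^(n-1)) / (q - 1)) * xi q γ δ (n-1) w := by
  intro w hw hden hden_mul hden_div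
  obtain ⟨hp0, -⟩ := ne_zero_of_mu_mul_sub_mu_div_ne_zero hden
  have hpw : p * (p * w) = p ^ 2 * w := by ring
  have hwp : p * (w / p) = w := mul_div_cancel₀ w hp0
  have hinner : Dq q γ δ p (Dq q γ δ p (xi q γ δ n)) w
      = Dq q γ δ p (fun v => (1 - q ^ n) / (q - 1) * xiScaled q γ δ p (n - 1) v) w := by
    refine Dq_congr (Dq_xi hp n ?_) (Dq_xi hp n ?_)
    · rwa [hpw, mul_div_cancel_left₀ w hp0]
    · rwa [hwp, div_div, ← sq]
  rw [hinner, Dq_const_mul, Dq_xiScaled hp p (n - 1) hden, ← sq, hp]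
  match n with
  | 0 => simp
  | 1 => simp
  | m + 2 =>
    rw [show m + 2 - 1 - 1 = m from rfl, show m + 2 - 1 = m + 1 from rfl,
      xi_succ_eq_xi_one_mul m hw]
    ring

theorem stmt_13 (q p γ δ : ℂ) (hq0 : q ≠ 0) (hq1 : q ≠ 1) (hp : p^2 = q)
    (n : ℕ) (hn : 1 ≤ n) :
    ∀ w : ℂ, w ≠ 0 →
      mu q γ δ (p * w) - mu q γ δ (w / p) ≠ 0 →
      mu q γ δ (p^2 * w) - mu q γ δ w ≠ 0 →
      mu q γ δ w - mu q γ δ (w / p^2) ≠ 0 →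
      xi q γ δ 1 w * Dq q γ δ p (Dq q γ δ p (fun v => xi q γ δ n v)) w
        = ((1 - q^n) / (q - 1)) * (p * (1 - q^(n-1)) / (q - 1)) * xi q γ δ (n-1) w :=
  stmt_13_general q p γ δ hp n
end

section
/- Fix q ∈ ℂ with q ≠ 0, q ≠ 1, p ∈ ℂ with p² = q, and γ,δ ∈ ℂ, and let n ≥ 1. For every w ∈ ℂ∖{0} for which the denominators m(p²w) − m(w) and m(w) − m(w/p²) are nonzero, ξ_1(w)·(𝕊(𝔻ξ_n))(w) = [(1 − q^n)/(q − 1)]·[ (1/2)·(1 − q·γδ·q^{2(n−1)})·(1 − q^{−(n−1)})·ξ_{n−1}(w) + ((1 + q^{n−1})/(2q^{n−1}))·ξ_n(w) ]. -/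
/-!
Clearing the denominator of each factor, `w * (1 + γδq^(2k+1) - q^k m(w)) = (w - q^k)(1 - γδq^(k+1) w)`,
so `w^n ξ_n(w)` is a product of two q-shifted factorials in `w`. Shifting `w ↦ qw` moves the first
one down and the second one up by one step, and the difference of the two shifted products has a
single non-common factor; this gives the lowering rule `𝔻 ξ_{n+1}(pw) = [n+1]_q ξ_n(w)`, where on the
right `γ` is replaced by `γq`. Averaging the values at `pw` and `w/p = p(w/q)`, and multiplying by
`ξ_1`, turns both terms into rational multiples of `ξ_n(w)`, and the claim becomes an identity of
rational functions.
-/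

open Complex Finset

/-- Averaging operator on the lattice m(w) (p² = q). -/
noncomputable def Sq (p : ℂ) (f : ℂ → ℂ) (w : ℂ) : ℂ :=
  (f (p * w) + f (w / p)) / 2

variable {q γ δ w : ℂ}

theorem xi_eq_prod_mul_prod_div_pow (hw : w ≠ 0) (n : ℕ) :
    xi q γ δ n w
      = (∏ k ∈ range n, (w - q ^ k)) * (∏ k ∈ range n, (1 - γ * δ * q ^ (k + 1) * w)) / w ^ n := by
  rw [xi, ← prod_mul_distrib, pow_eq_prod_const, ← prod_div_distrib]
  refine prod_congr rfl fun k _ => ?_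
  rw [mu]
  field_simp
  ring

theorem xi_mul_q_eq_prod_mul_prod_div_pow (hw : w ≠ 0) (n : ℕ) :
    xi q (γ * q) δ n w
      = (∏ k ∈ range n, (w - q ^ k)) * (∏ k ∈ range n, (1 - γ * δ * q ^ (k + 2) * w)) / w ^ n := by
  rw [xi_eq_prod_mul_prod_div_pow hw]
  congr 2
  exact prod_congr rfl fun k _ => by ring

theorem prod_range_shift_mul {M : Type*} [CommMonoid M] (f : ℕ → M) (n : ℕ) :
    (∏ k ∈ range n, f (k + 1)) * f 0 = (∏ k ∈ range n, f k) * f n :=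
  (prod_range_succ' f n).symm.trans (prod_range_succ f n)

theorem xi_succ (hw : w ≠ 0) (n : ℕ) :
    xi q γ δ (n + 1) w = xi q γ δ n w * ((w - q ^ n) * (1 - γ * δ * q ^ (n + 1) * w) / w) := by
  rw [xi_eq_prod_mul_prod_div_pow hw, xi_eq_prod_mul_prod_div_pow hw, prod_range_succ,
    prod_range_succ, pow_succ]
  ring

theorem xi_one_mul_xi_mul_q (hw : w ≠ 0) (n : ℕ) :
    xi q γ δ 1 w * xi q (γ * q) δ n w
      = (w - 1) * (1 - γ * δ * q ^ (n + 1) * w) / w * xi q γ δ n w := by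
  have h_shift := prod_range_shift_mul (fun k => 1 - γ * δ * q ^ (k + 1) * w) n
  simp only [zero_add, pow_one, add_assoc, one_add_one_eq_two] at h_shift
  rw [xi_mul_q_eq_prod_mul_prod_div_pow hw, xi_eq_prod_mul_prod_div_pow hw,
    xi_eq_prod_mul_prod_div_pow hw]
  simp only [prod_range_one, pow_zero, zero_add, pow_one]
  linear_combination (w - 1) * (∏ k ∈ range n, (w - q ^ k)) / w ^ (n + 1) * h_shift

theorem xi_one_mul_xi_mul_q_div (hq : q ≠ 0) (hw : w ≠ 0) (n : ℕ) :
    xi q γ δ 1 w * xi q (γ * q) δ n (w / q)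
      = (1 - γ * δ * q * w) * (w - q ^ n) / w * xi q γ δ n w := by
  have h_shift := prod_range_shift_mul (fun k => w - q ^ k) n
  simp only [pow_zero] at h_shift
  have hL : ∏ k ∈ range n, (w / q - q ^ k) = (∏ k ∈ range n, (w - q ^ (k + 1))) / q ^ n := by
    rw [pow_eq_prod_const, ← prod_div_distrib]
    exact prod_congr rfl fun k _ => by field_simp; ring
  have hR : ∏ k ∈ range n, (1 - γ * δ * q ^ (k + 2) * (w / q))
      = ∏ k ∈ range n, (1 - γ * δ * q ^ (k + 1) * w) :=
    prod_congr rfl fun k _ => by field_simp; ring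
  rw [xi_mul_q_eq_prod_mul_prod_div_pow (div_ne_zero hw hq), xi_eq_prod_mul_prod_div_pow hw,
    xi_eq_prod_mul_prod_div_pow hw, hL, hR, div_pow]
  simp only [prod_range_one, pow_zero, zero_add, pow_one]
  generalize ∏ k ∈ range n, (1 - γ * δ * q ^ (k + 1) * w) = R
  field_simp
  linear_combination (1 - γ * δ * q * w) * R * h_shift

theorem sub_one_mul_xi_succ_sub (hq : q ≠ 0) (hw : w ≠ 0) (n : ℕ) :
    (q - 1) * (xi q γ δ (n + 1) (q * w) - xi q γ δ (n + 1) w)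
      = (1 - q ^ (n + 1)) * (mu q γ δ (q * w) - mu q γ δ w) * xi q (γ * q) δ n w := by
  have hL_qw : ∏ k ∈ range (n + 1), (q * w - q ^ k)
      = (q * w - 1) * (q ^ n * ∏ k ∈ range n, (w - q ^ k)) := by
    rw [prod_range_succ', mul_comm, pow_eq_prod_const q n, ← prod_mul_distrib, pow_zero]
    exact congrArg _ (prod_congr rfl fun k _ => by ring)
  have hR_qw : ∏ k ∈ range (n + 1), (1 - γ * δ * q ^ (k + 1) * (q * w))
      = (∏ k ∈ range n, (1 - γ * δ * q ^ (k + 2) * w)) * (1 - γ * δ * q ^ (n + 2) * w) := by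
    rw [prod_range_succ]
    congr 1
    · exact prod_congr rfl fun k _ => by ring
    · ring
  have hR_w : ∏ k ∈ range (n + 1), (1 - γ * δ * q ^ (k + 1) * w)
      = (∏ k ∈ range n, (1 - γ * δ * q ^ (k + 2) * w)) * (1 - γ * δ * q * w) := by
    rw [prod_range_succ']
    simp only [zero_add, pow_one, add_assoc, one_add_one_eq_two]
  rw [xi_eq_prod_mul_prod_div_pow (mul_ne_zero hq hw), xi_eq_prod_mul_prod_div_pow hw,
    xi_mul_q_eq_prod_mul_prod_div_pow hw, hL_qw, hR_qw, hR_w, prod_range_succ, mu, mu]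
  generalize ∏ k ∈ range n, (w - q ^ k) = L
  generalize ∏ k ∈ range n, (1 - γ * δ * q ^ (k + 2) * w) = R
  field_simp
  ring

theorem Dq_xi_succ {p : ℂ} (hp : p ^ 2 = q) (hq : q ≠ 0) (hw : w ≠ 0)
    (hΔ : mu q γ δ (q * w) - mu q γ δ w ≠ 0) (n : ℕ) :
    Dq q γ δ p (xi q γ δ (n + 1)) (p * w) = (1 - q ^ (n + 1)) / (q - 1) * xi q (γ * q) δ n w := by
  have hp0 : p ≠ 0 := by rintro rfl; exact hq (by rw [← hp]; ring)
  have hq1 : q - 1 ≠ 0 := by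
    intro h
    rw [sub_eq_zero.mp h, one_mul, sub_self] at hΔ
    exact hΔ rfl
  rw [Dq, ← mul_assoc, ← sq, hp, mul_div_cancel_left₀ w hp0, div_eq_iff hΔ,
    div_mul_eq_mul_div, div_mul_eq_mul_div, eq_div_iff hq1]
  linear_combination sub_one_mul_xi_succ_sub hq hw n

theorem stmt_14_general (q p γ δ : ℂ) (hq0 : q ≠ 0) (hp : p^2 = q)
    (n : ℕ) :
    ∀ w : ℂ, w ≠ 0 →
      mu q γ δ (p^2 * w) - mu q γ δ w ≠ 0 →
      mu q γ δ w - mu q γ δ (w / p^2) ≠ 0 →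
      xi q γ δ 1 w * Sq p (Dq q γ δ p (fun v => xi q γ δ n v)) w
        = ((1 - q^n) / (q - 1)) *
          ( (1/2) * (1 - q * (γ*δ) * q^(2*(n-1))) * (1 - (q^(n-1))⁻¹) * xi q γ δ (n-1) w
            + ((1 + q^(n-1)) / (2 * q^(n-1))) * xi q γ δ n w ) := by
  intro w hw hΔfwd hΔbwd
  rcases n with _ | n
  · simp [xi, Sq, Dq]
  rw [hp] at hΔfwd hΔbwd
  have hwq : w / q ≠ 0 := div_ne_zero hw hq0
  have hw_div_p : w / p = p * (w / q) := by rw [← hp]; field_simp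
  rw [Sq, hw_div_p, Dq_xi_succ hp hq0 hw hΔfwd,
    Dq_xi_succ hp hq0 hwq (by rwa [mul_div_cancel₀ w hq0]), Nat.add_sub_cancel, xi_succ hw n]
  linear_combination (norm := skip)
    (1 - q ^ (n + 1)) / (q - 1) / 2 * (xi_one_mul_xi_mul_q (γ := γ) (δ := δ) hw n
      + xi_one_mul_xi_mul_q_div (γ := γ) (δ := δ) hq0 hw n)
  field_simp
  ring

theorem stmt_14 (q p γ δ : ℂ) (hq0 : q ≠ 0) (hq1 : q ≠ 1) (hp : p^2 = q)
    (n : ℕ) (hn : 1 ≤ n) :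
    ∀ w : ℂ, w ≠ 0 →
      mu q γ δ (p^2 * w) - mu q γ δ w ≠ 0 →
      mu q γ δ w - mu q γ δ (w / p^2) ≠ 0 →
      xi q γ δ 1 w * Sq p (Dq q γ δ p (fun v => xi q γ δ n v)) w
        = ((1 - q^n) / (q - 1)) *
          ( (1/2) * (1 - q * (γ*δ) * q^(2*(n-1))) * (1 - (q^(n-1))⁻¹) * xi q γ δ (n-1) w
            + ((1 + q^(n-1)) / (2 * q^(n-1))) * xi q γ δ n w ) :=
  stmt_14_general q p γ δ hq0 hp n
end
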